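/- Let G be the presented group on two generators μ and λ subject to the single relation μλμ = λ. Then the commutator subgroup [G, G] equals the cyclic subgroup generated by μ², i.e., [G,G] = { μ^{2n} : n ∈ ℤ }, and μ² has infinite order in G, so that [G,G] is infinite cyclic. -/

import Mathlib

/-- The two generators `μ` and `λ` of the Klein bottle group. -/
inductive KleinGen : Type
  | mu : KleinGen
  | lam : KleinGen

/-- The single relator `μλμλ⁻¹` of the Klein bottle group. -/
def kleinRels : Set (FreeGroup KleinGen) :=
  {FreeGroup.of KleinGen.mu * FreeGroup.of KleinGen.lam * FreeGroup.of KleinGen.mu *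
    (FreeGroup.of KleinGen.lam)⁻¹}

/-- The presented group `G = ⟨μ, λ | μλμ = λ⟩`. -/
abbrev KleinGroup : Type := PresentedGroup kleinRels

/-- The image of the generator `μ` in `G`. -/
def muG : KleinGroup := PresentedGroup.of KleinGen.mu

/-- The image of the generator `λ` in `G`. -/
def lamG : KleinGroup := PresentedGroup.of KleinGen.lam

open scoped commutatorElement

/- ### Auxiliary lemmas -/

theorem klein_rel : muG * lamG * muG * lamG⁻¹ = 1 := by
  have h : (QuotientGroup.mk' (Subgroup.normalClosure kleinRels))
      (FreeGroup.of KleinGen.mu * FreeGroup.of KleinGen.lam * FreeGroup.of KleinGen.mu *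
        (FreeGroup.of KleinGen.lam)⁻¹) = 1 :=
    (QuotientGroup.eq_one_iff _).mpr
      (Subgroup.subset_normalClosure (Set.mem_singleton _))
  simp only [muG, lamG, PresentedGroup.of, ← map_inv, ← map_mul]
  exact h

theorem klein_h1 : muG * lamG * muG = lamG := by
  have := klein_rel
  rw [mul_inv_eq_one] at this
  exact this

theorem klein_h2 : lamG * muG = muG⁻¹ * lamG := by
  calc lamG * muG = muG⁻¹ * (muG * lamG * muG) := by group
    _ = muG⁻¹ * lamG := by rw [klein_h1]

theorem klein_conj : lamG * muG * lamG⁻¹ = muG⁻¹ := by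
  rw [klein_h2]; group

theorem klein_conj_inv : lamG * muG⁻¹ * lamG⁻¹ = muG := by
  calc lamG * muG⁻¹ * lamG⁻¹ = (lamG * muG * lamG⁻¹)⁻¹ := by group
    _ = muG⁻¹⁻¹ := by rw [klein_conj]
    _ = muG := inv_inv _

theorem klein_conj' : lamG⁻¹ * muG * lamG = muG⁻¹ := by
  calc lamG⁻¹ * muG * lamG = lamG⁻¹ * (lamG * muG⁻¹ * lamG⁻¹) * lamG := by
        rw [klein_conj_inv]
    _ = muG⁻¹ := by group

theorem klein_comm : ⁅muG, lamG⁆ = muG ^ 2 := by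
  rw [commutatorElement_def]
  have h : muG * lamG * muG⁻¹ * lamG⁻¹ = muG * (lamG * muG⁻¹ * lamG⁻¹) := by group
  rw [h, klein_conj_inv, sq]

theorem klein_conj_sq : lamG * muG ^ 2 * lamG⁻¹ = (muG ^ 2)⁻¹ := by
  calc lamG * muG ^ 2 * lamG⁻¹ = (lamG * muG * lamG⁻¹) * (lamG * muG * lamG⁻¹) := by
        rw [sq]; group
    _ = muG⁻¹ * muG⁻¹ := by rw [klein_conj]
    _ = (muG ^ 2)⁻¹ := by rw [sq]; group

theorem klein_conj_sq' : lamG⁻¹ * muG ^ 2 * lamG = (muG ^ 2)⁻¹ := by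
  calc lamG⁻¹ * muG ^ 2 * lamG = (lamG⁻¹ * muG * lamG) * (lamG⁻¹ * muG * lamG) := by
        rw [sq]; group
    _ = muG⁻¹ * muG⁻¹ := by rw [klein_conj']
    _ = (muG ^ 2)⁻¹ := by rw [sq]; group

theorem klein_conj_zpow (k : ℤ) : lamG * (muG ^ 2) ^ k * lamG⁻¹ = (muG ^ 2) ^ (-k) := by
  calc lamG * (muG ^ 2) ^ k * lamG⁻¹ = (lamG * muG ^ 2 * lamG⁻¹) ^ k := by rw [conj_zpow]
    _ = ((muG ^ 2)⁻¹) ^ k := by rw [klein_conj_sq]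
    _ = (muG ^ 2) ^ (-k) := by group

theorem klein_conj_zpow' (k : ℤ) : lamG⁻¹ * (muG ^ 2) ^ k * lamG = (muG ^ 2) ^ (-k) := by
  calc lamG⁻¹ * (muG ^ 2) ^ k * lamG = lamG⁻¹ * (muG ^ 2) ^ k * lamG⁻¹⁻¹ := by rw [inv_inv]
    _ = (lamG⁻¹ * muG ^ 2 * lamG⁻¹⁻¹) ^ k := by rw [conj_zpow]
    _ = ((muG ^ 2)⁻¹) ^ k := by rw [inv_inv, klein_conj_sq']
    _ = (muG ^ 2) ^ (-k) := by group

theorem klein_H_normal : (Subgroup.zpowers (muG ^ 2)).Normal := by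
  set H := Subgroup.zpowers (muG ^ 2) with hH
  have htop : Subgroup.closure (Set.range (PresentedGroup.of : KleinGen → KleinGroup)) = ⊤ :=
    PresentedGroup.closure_range_of _
  have hle : (⊤ : Subgroup KleinGroup) ≤ Subgroup.normalizer (H : Set KleinGroup) := by
    rw [← htop]
    apply (Subgroup.closure_le _).mpr
    rintro x ⟨g, rfl⟩
    cases g with
    | mu =>
      have hx : (PresentedGroup.of KleinGen.mu : KleinGroup) = muG := rfl
      rw [SetLike.mem_coe, hx, Subgroup.mem_normalizer_iff]
      intro h
      rw [hH, Subgroup.mem_zpowers_iff, Subgroup.mem_zpowers_iff]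
      constructor
      · rintro ⟨k, rfl⟩
        refine ⟨k, ?_⟩
        group
      · rintro ⟨k, hk⟩
        refine ⟨k, ?_⟩
        have hh : h = muG⁻¹ * (muG * h * muG⁻¹) * muG := by group
        rw [hh, ← hk]; group
    | lam =>
      have hx : (PresentedGroup.of KleinGen.lam : KleinGroup) = lamG := rfl
      rw [SetLike.mem_coe, hx, Subgroup.mem_normalizer_iff]
      intro h
      rw [hH, Subgroup.mem_zpowers_iff, Subgroup.mem_zpowers_iff]
      constructor
      · rintro ⟨k, rfl⟩
        exact ⟨-k, (klein_conj_zpow k).symm⟩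
      · rintro ⟨k, hk⟩
        refine ⟨-k, ?_⟩
        have hh : h = lamG⁻¹ * (lamG * h * lamG⁻¹) * lamG := by group
        rw [hh, ← hk, klein_conj_zpow' k]
  exact Subgroup.normalizer_eq_top_iff.mp (top_le_iff.mp hle)

theorem klein_comm_le : commutator KleinGroup ≤ Subgroup.zpowers (muG ^ 2) := by
  set H := Subgroup.zpowers (muG ^ 2) with hH
  haveI : H.Normal := klein_H_normal
  set q := QuotientGroup.mk' H with hq
  have hmem2 : muG ^ 2 ∈ H := Subgroup.mem_zpowers _
  -- images of generators commute in the quotient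
  have hgen : Commute (q muG) (q lamG) := by
    have : q (lamG * muG) = q (muG * lamG) := by
      rw [QuotientGroup.mk'_eq_mk']
      refine ⟨(muG ^ 2)⁻¹, inv_mem hmem2, ?_⟩
      calc lamG * muG * (muG ^ 2)⁻¹ = (lamG * muG⁻¹ * lamG⁻¹) * lamG := by group
        _ = muG * lamG := by rw [klein_conj_inv]
    unfold Commute SemiconjBy
    rw [← map_mul, ← map_mul, this]
  -- all elements of the quotient commute
  have habel : ∀ x y : KleinGroup ⧸ H, Commute x y := by
    have hsurj : Function.Surjective q := QuotientGroup.mk'_surjective H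
    have htop : Subgroup.closure (Set.range (q ∘ PresentedGroup.of)) =
        (⊤ : Subgroup (KleinGroup ⧸ H)) := by
      rw [Set.range_comp, ← MonoidHom.map_closure, PresentedGroup.closure_range_of,
        ← MonoidHom.range_eq_map, MonoidHom.range_eq_top.mpr hsurj]
    intro x y
    have hx : x ∈ Subgroup.closure (Set.range (q ∘ PresentedGroup.of)) := by
      rw [htop]; trivial
    have hy : y ∈ Subgroup.closure (Set.range (q ∘ PresentedGroup.of)) := by
      rw [htop]; trivial
    induction hx, hy using Subgroup.closure_induction₂ with
    | mem a b ha hb =>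
      obtain ⟨ga, rfl⟩ := ha
      obtain ⟨gb, rfl⟩ := hb
      cases ga <;> cases gb
      · exact Commute.refl _
      · exact hgen
      · exact hgen.symm
      · exact Commute.refl _
    | one_left b hb => exact Commute.one_left _
    | one_right a ha => exact Commute.one_right _
    | mul_left a b c _ _ _ h1 h2 => exact h1.mul_left h2
    | mul_right a b c _ _ _ h1 h2 => exact h1.mul_right h2
    | inv_left a b _ _ h1 => exact h1.inv_left
    | inv_right a b _ _ h1 => exact h1.inv_right
  rw [commutator_def]
  refine Subgroup.commutator_le.mpr fun g _ h _ => ?_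
  have h1 : q ⁅g, h⁆ = 1 := by
    rw [map_commutatorElement, commutatorElement_eq_one_iff_commute]
    exact habel _ _
  have : ⁅g, h⁆ ∈ q.ker := h1
  rwa [QuotientGroup.ker_mk'] at this

theorem klein_le_comm : Subgroup.zpowers (muG ^ 2) ≤ commutator KleinGroup := by
  rw [Subgroup.zpowers_le, ← klein_comm, commutator_def]
  exact Subgroup.commutator_mem_commutator (Subgroup.mem_top _) (Subgroup.mem_top _)

/-- homomorphism to the infinite dihedral group -/
noncomputable def kleinToD : KleinGroup →* DihedralGroup 0 :=
  PresentedGroup.toGroup (f := fun g => match g with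
    | KleinGen.mu => DihedralGroup.r 1
    | KleinGen.lam => DihedralGroup.sr 0) (by
      intro r hr
      rw [kleinRels, Set.mem_singleton_iff] at hr
      subst hr
      simp only [map_mul, map_inv, FreeGroup.lift_apply_of]
      show DihedralGroup.r 1 * DihedralGroup.sr 0 * DihedralGroup.r 1 *
        (DihedralGroup.sr 0)⁻¹ = 1
      rw [DihedralGroup.r_mul_sr, DihedralGroup.sr_mul_r]
      norm_num)

theorem klein_mu_inf : ¬ IsOfFinOrder (muG ^ 2) := by
  intro h
  have hmu : IsOfFinOrder muG := by
    rcases isOfFinOrder_pow.mp h with h' | h'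
    · exact h'
    · omega
  have : IsOfFinOrder (kleinToD muG) := kleinToD.isOfFinOrder hmu
  have heq : kleinToD muG = DihedralGroup.r 1 := PresentedGroup.toGroup.of _
  rw [heq] at this
  have : orderOf (DihedralGroup.r 1 : DihedralGroup 0) ≠ 0 := by
    rwa [ne_eq, orderOf_eq_zero_iff, not_not]
  rw [DihedralGroup.orderOf_r_one] at this
  exact this rfl

/-- The commutator subgroup of the Klein bottle group `G = ⟨μ, λ | μλμ = λ⟩` is exactly
the cyclic subgroup generated by `μ²`, and `μ²` has infinite order, so that `[G,G]` is
infinite cyclic. -/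
theorem kleinGroup_commutator :
    commutator KleinGroup = Subgroup.zpowers (muG ^ 2) ∧
    ¬ IsOfFinOrder (muG ^ 2) ∧
    Nonempty ((commutator KleinGroup) ≃* Multiplicative ℤ) := by
  have heq : commutator KleinGroup = Subgroup.zpowers (muG ^ 2) :=
    le_antisymm klein_comm_le klein_le_comm
  refine ⟨heq, klein_mu_inf, ?_⟩
  have hinj : Function.Injective (zpowersHom KleinGroup (muG ^ 2)) := by
    intro a b hab
    have : (muG ^ 2) ^ (Multiplicative.toAdd a) = (muG ^ 2) ^ (Multiplicative.toAdd b) := hab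
    exact (Multiplicative.toAdd.injective)
      (injective_zpow_iff_not_isOfFinOrder.mpr klein_mu_inf this)
  have e : Multiplicative ℤ ≃* (zpowersHom KleinGroup (muG ^ 2)).range :=
    MonoidHom.ofInjective hinj
  have hr : (zpowersHom KleinGroup (muG ^ 2)).range = Subgroup.zpowers (muG ^ 2) :=
    Subgroup.range_zpowersHom _
  rw [heq]
  exact ⟨(hr ▸ e).symm⟩
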